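/- arXiv:2510.16566 — 2 statements merged into one kernel-verified Lean document; each statement's English description precedes it below -/
import Mathlib

section
/- Let I be a monomial ideal of R = K[x_1,…,x_n], let p be a monomial prime ideal of R, let t ≥ 1 be an integer, and let y_1,…,y_s be distinct variables of R such that for each i = 1,…,s there exist an integer α_i ≥ 1 and a monomial ideal J_i of R with y_i ∉ supp(J_i), I^t + (y_i^{α_i}) = J_i + (y_i^{α_i}), and p∖y_i ∉ Ass(R/J_i). If ∏_{i=1}^s y_i^{α_i} ∈ I^ℓ for some integer ℓ ≥ t, then p ∉ Ass(R/I^t). -/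
/-!
If `p = (x_i : i ∈ T)` is associated to the monomial ideal `I^t`, then `p = (I^t : x^v)` for a
monomial `x^v`, which is therefore not in `I^t`. Should `v(y_i) < α_i` for some `i`, the
monomials `x^(m + v)` with `m` free of `y_i` lie in `I^t` exactly when they lie in `J_i`; as `J_i`
does not involve `y_i`, this gives `(J_i : x^v) = p ∖ y_i`, which is excluded. Hence every
`y_i^(α_i)` divides `x^v`, and so does their product (the `y_i` being distinct), which puts `x^v`
in `I^ℓ ⊆ I^t`.
-/

open MvPolynomial

/-- `I` is an ideal of `K[x_1,…,x_n]` generated by monomials. -/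
def IsMonomialIdeal {K : Type*} [Field K] {n : ℕ}
    (I : Ideal (MvPolynomial (Fin n) K)) : Prop :=
  ∃ S : Set (Fin n →₀ ℕ),
    I = Ideal.span ((fun e => MvPolynomial.monomial e (1 : K)) '' S)

/-- `I` is a monomial ideal admitting a monomial generating set in which no
monomial is divisible by a variable `x_i` with `i ∈ A`; equivalently, `I` is a
monomial ideal whose support is disjoint from `A`. -/
def MonomialIdealAvoiding {K : Type*} [Field K] {n : ℕ} (A : Set (Fin n))
    (I : Ideal (MvPolynomial (Fin n) K)) : Prop :=
  ∃ S : Set (Fin n →₀ ℕ), (∀ e ∈ S, ∀ i ∈ A, e i = 0) ∧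
    I = Ideal.span ((fun e => MvPolynomial.monomial e (1 : K)) '' S)

namespace MvPolynomial

theorem isPrime_span_X_image {σ R : Type*} [CommRing R] [IsDomain R] (A : Set σ) :
    (Ideal.span (X '' A : Set (MvPolynomial σ R))).IsPrime := by
  classical
  set P := Ideal.span (X '' A : Set (MvPolynomial σ R))
  let φ : MvPolynomial σ R →ₐ[R] MvPolynomial σ R := aeval fun i => if i ∈ A then 0 else X i
  have hφ : (Ideal.Quotient.mkₐ R P).comp φ = Ideal.Quotient.mkₐ R P := by
    ext i
    by_cases hi : i ∈ A
    · have : X i ∈ P := Ideal.subset_span ⟨i, hi, rfl⟩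
      simp [φ, hi, Ideal.Quotient.eq_zero_iff_mem.mpr this]
    · simp [φ, hi]
  suffices P = RingHom.ker φ from this ▸ RingHom.ker_isPrime _
  refine le_antisymm (Ideal.span_le.mpr ?_) fun f hf => ?_
  · rintro _ ⟨i, hi, rfl⟩
    simp [φ, hi]
  · have := congr($hφ f)
    simp only [AlgHom.comp_apply, (RingHom.mem_ker).mp hf, map_zero,
      Ideal.Quotient.mkₐ_eq_mk] at this
    exact Ideal.Quotient.eq_zero_iff_mem.mp this.symm

variable {σ R : Type*} [CommSemiring R]

theorem monomial_mem_span_monomial_image_iff [Nontrivial R] {S : Set (σ →₀ ℕ)} {e : σ →₀ ℕ} :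
    monomial e (1 : R) ∈ Ideal.span ((fun e => monomial e (1 : R)) '' S) ↔ ∃ a ∈ S, a ≤ e := by
  classical
  simp [mem_ideal_span_monomial_image, support_monomial]

theorem monomial_mem_of_le {I : Ideal (MvPolynomial σ R)} {e e' : σ →₀ ℕ}
    (h : monomial e (1 : R) ∈ I) (hle : e ≤ e') : monomial e' (1 : R) ∈ I :=
  I.mem_of_dvd (monomial_dvd_monomial.mpr ⟨Or.inr hle, dvd_rfl⟩) h

theorem monomial_mem_span_X_pow_iff [Nontrivial R] {i : σ} {a : ℕ} {e : σ →₀ ℕ} :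
    monomial e (1 : R) ∈ Ideal.span {(X i : MvPolynomial σ R) ^ a} ↔ a ≤ e i := by
  rw [Ideal.mem_span_singleton, X_pow_eq_monomial, monomial_dvd_monomial]
  simp [Finsupp.single_le_iff]

theorem monomial_mem_span_X_image_iff [Nontrivial R] {T : Set σ} {m : σ →₀ ℕ} :
    monomial m (1 : R) ∈ Ideal.span (X '' T) ↔ ∃ i ∈ T, m i ≠ 0 := by
  classical
  simp [mem_ideal_span_X_image, support_monomial]

theorem prod_X_pow_dvd_monomial {ι : Type*} [Fintype ι] {y : ι → σ}
    (hy : Function.Injective y) {α : ι → ℕ} {v : σ →₀ ℕ} (h : ∀ i, α i ≤ v (y i)) :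
    ∏ i, (X (y i) : MvPolynomial σ R) ^ α i ∣ monomial v 1 := by
  classical
  simp_rw [X_pow_eq_monomial, ← monomial_sum_one, monomial_dvd_monomial, dvd_refl, and_true]
  refine Or.inr fun j => ?_
  rw [Finsupp.finsetSum_apply]
  by_cases hj : ∃ i, y i = j
  · obtain ⟨i, rfl⟩ := hj
    rw [Finset.sum_eq_single i (fun k _ hk => Finsupp.single_eq_of_ne (hy.ne hk).symm) (by simp)]
    simpa using h i
  · push Not at hj
    rw [Finset.sum_eq_zero fun i _ => Finsupp.single_eq_of_ne (hj i).symm]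
    exact zero_le

end MvPolynomial

theorem mem_associatedPrimes_quotient_iff {R : Type*} [CommRing R] [IsNoetherianRing R]
    {P J : Ideal R} :
    P ∈ associatedPrimes R (R ⧸ J) ↔ P.IsPrime ∧ ∃ f : R, ∀ r, r ∈ P ↔ r * f ∈ J := by
  refine isAssociatedPrime_iff.trans (and_congr_right fun _ => ?_)
  refine Ideal.Quotient.mk_surjective.exists.trans (exists_congr fun f => ?_)
  simp [SetLike.ext_iff, Submodule.mem_colon_singleton, Algebra.smul_def, ← map_mul,
    Ideal.Quotient.eq_zero_iff_mem]

section MonomialIdeal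

variable {K : Type*} [Field K] {n : ℕ} {I J : Ideal (MvPolynomial (Fin n) K)}

theorem IsMonomialIdeal.mem_iff (hI : IsMonomialIdeal I) {f : MvPolynomial (Fin n) K} :
    f ∈ I ↔ ∀ m ∈ f.support, monomial m (1 : K) ∈ I := by
  obtain ⟨S, rfl⟩ := hI
  rw [mem_ideal_span_monomial_image]
  simp only [monomial_mem_span_monomial_image_iff]

theorem IsMonomialIdeal.mul_monomial_mem_iff (hI : IsMonomialIdeal I)
    {f : MvPolynomial (Fin n) K} {v : Fin n →₀ ℕ} :
    f * monomial v 1 ∈ I ↔ ∀ m ∈ f.support, monomial (m + v) (1 : K) ∈ I := by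
  have : (f * monomial v 1).support = f.support.map (addRightEmbedding v) :=
    AddMonoidAlgebra.support_coeff_mul_single f _ (by simp) _
  rw [hI.mem_iff, this, Finset.forall_mem_map]
  rfl

theorem IsMonomialIdeal.monomial_add_mem_of_monomial_mul_mem (hI : IsMonomialIdeal I)
    {f : MvPolynomial (Fin n) K} {u v : Fin n →₀ ℕ} (h : monomial u 1 * f ∈ I)
    (hv : v ∈ f.support) : monomial (u + v) (1 : K) ∈ I := by
  rw [mul_comm, hI.mul_monomial_mem_iff] at h
  simpa [add_comm] using h v hv

theorem IsMonomialIdeal.monomial_mem_sup_iff (hI : IsMonomialIdeal I) (hJ : IsMonomialIdeal J)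
    {e : Fin n →₀ ℕ} :
    monomial e (1 : K) ∈ I ⊔ J ↔ monomial e (1 : K) ∈ I ∨ monomial e (1 : K) ∈ J := by
  obtain ⟨S, rfl⟩ := hI
  obtain ⟨S', rfl⟩ := hJ
  rw [← Ideal.span_union, ← Set.image_union]
  simp only [monomial_mem_span_monomial_image_iff, Set.mem_union, or_and_right, exists_or]

theorem isMonomialIdeal_span_X_pow (i : Fin n) (a : ℕ) :
    IsMonomialIdeal (Ideal.span {(X i : MvPolynomial (Fin n) K) ^ a}) :=
  ⟨{Finsupp.single i a}, by rw [Set.image_singleton, X_pow_eq_monomial]⟩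

theorem IsMonomialIdeal.mul (hI : IsMonomialIdeal I) (hJ : IsMonomialIdeal J) :
    IsMonomialIdeal (I * J) := by
  obtain ⟨S, rfl⟩ := hI
  obtain ⟨S', rfl⟩ := hJ
  refine ⟨Set.image2 (· + ·) S S', ?_⟩
  rw [Ideal.span_mul_span', Set.image_image2, ← Set.image2_mul, Set.image2_image_left,
    Set.image2_image_right]
  simp only [monomial_mul, one_mul]

theorem IsMonomialIdeal.pow (hI : IsMonomialIdeal I) (t : ℕ) : IsMonomialIdeal (I ^ t) := by
  induction t with
  | zero => exact ⟨{0}, by simp [Ideal.one_eq_top]⟩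
  | succ t ih => exact pow_succ I t ▸ ih.mul hI

theorem MonomialIdealAvoiding.isMonomialIdeal {A : Set (Fin n)} (hJ : MonomialIdealAvoiding A J) :
    IsMonomialIdeal J :=
  let ⟨S, _, hS⟩ := hJ
  ⟨S, hS⟩

theorem MonomialIdealAvoiding.monomial_mem_iff {A : Set (Fin n)} (hJ : MonomialIdealAvoiding A J)
    {e e' : Fin n →₀ ℕ} (h : ∀ j ∉ A, e j = e' j) :
    monomial e (1 : K) ∈ J ↔ monomial e' (1 : K) ∈ J := by
  obtain ⟨S, hS, rfl⟩ := hJ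
  simp only [monomial_mem_span_monomial_image_iff]
  refine exists_congr fun a => and_congr_right fun ha => ?_
  simp only [Finsupp.le_def]
  refine forall_congr' fun j => ?_
  by_cases hj : j ∈ A
  · simp [hS a ha j hj]
  · rw [h j hj]

theorem monomial_mem_iff_of_add_span_X_pow_eq (hI : IsMonomialIdeal I) (hJ : IsMonomialIdeal J)
    {y : Fin n} {a : ℕ} (hIJ : I + Ideal.span {X y ^ a} = J + Ideal.span {X y ^ a})
    {e : Fin n →₀ ℕ} (he : e y < a) : monomial e (1 : K) ∈ I ↔ monomial e (1 : K) ∈ J := by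
  have h := Iff.of_eq congr(monomial e (1 : K) ∈ $hIJ)
  simpa only [Ideal.add_eq_sup, hI.monomial_mem_sup_iff (isMonomialIdeal_span_X_pow y a),
    hJ.monomial_mem_sup_iff (isMonomialIdeal_span_X_pow y a), monomial_mem_span_X_pow_iff,
    not_le.mpr he, or_false] using h

theorem IsMonomialIdeal.exists_mem_support_of_isPrime (hI : IsMonomialIdeal I)
    {P : Ideal (MvPolynomial (Fin n) K)} [P.IsPrime] {f : MvPolynomial (Fin n) K}
    (hf : ∀ r, r ∈ P ↔ r * f ∈ I) :
    ∃ v ∈ f.support, ∀ e, monomial (e + v) (1 : K) ∈ I → monomial e (1 : K) ∈ P := by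
  -- Otherwise the product of the monomials `x^(c v)` lies outside `P` but multiplies `f` into `I`.
  by_contra! h
  choose! c hcI hcP using h
  set E := ∑ v ∈ f.support, c v
  have hE : monomial E (1 : K) ∉ P := by
    rw [monomial_sum_one, Ideal.IsPrime.prod_mem_iff]
    push Not
    exact hcP
  refine hE ((hf _).mpr ?_)
  rw [mul_comm, hI.mul_monomial_mem_iff]
  intro v hv
  refine monomial_mem_of_le (hcI v hv) ?_
  rw [add_comm (c v)]
  exact add_le_add_right (Finset.single_le_sum (by simp) hv) v

theorem IsMonomialIdeal.span_X_image_mem_associatedPrimes_iff (hI : IsMonomialIdeal I)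
    (T : Set (Fin n)) :
    Ideal.span (X '' T) ∈ associatedPrimes (MvPolynomial (Fin n) K) (MvPolynomial (Fin n) K ⧸ I) ↔
      ∃ v, ∀ m, monomial (m + v) (1 : K) ∈ I ↔ ∃ i ∈ T, m i ≠ 0 := by
  rw [mem_associatedPrimes_quotient_iff]
  constructor
  · rintro ⟨hP, f, hf⟩
    obtain ⟨v, hv, hvP⟩ := hI.exists_mem_support_of_isPrime hf
    refine ⟨v, fun m => ⟨fun h => monomial_mem_span_X_image_iff.mp (hvP m h), ?_⟩⟩
    rintro ⟨i, hi, hmi⟩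
    have hXf : monomial (Finsupp.single i 1) 1 * f ∈ I := (hf _).mp (Ideal.subset_span ⟨i, hi, rfl⟩)
    refine monomial_mem_of_le (hI.monomial_add_mem_of_monomial_mul_mem hXf hv) ?_
    exact add_le_add_left (Finsupp.single_le_iff.mpr (Nat.one_le_iff_ne_zero.mpr hmi)) v
  · rintro ⟨v, hv⟩
    refine ⟨isPrime_span_X_image T, monomial v 1, fun r => ?_⟩
    rw [mem_ideal_span_X_image, hI.mul_monomial_mem_iff]
    simp only [hv]

theorem MonomialIdealAvoiding.monomial_add_mem_iff_of_add_span_X_pow_eq {y : Fin n}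
    (hJ : MonomialIdealAvoiding {y} J) (hI : IsMonomialIdeal I) {a : ℕ}
    (hIJ : I + Ideal.span {X y ^ a} = J + Ideal.span {X y ^ a}) {T : Set (Fin n)}
    {v : Fin n →₀ ℕ} (hv : ∀ m, monomial (m + v) (1 : K) ∈ I ↔ ∃ i ∈ T, m i ≠ 0)
    (hvy : v y < a) (m : Fin n →₀ ℕ) :
    monomial (m + v) (1 : K) ∈ J ↔ ∃ i ∈ T \ {y}, m i ≠ 0 := by
  calc monomial (m + v) (1 : K) ∈ J ↔ monomial (m.erase y + v) (1 : K) ∈ J :=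
        hJ.monomial_mem_iff fun j hj => by simp [Finsupp.erase_ne (Set.mem_singleton_iff.not.mp hj)]
    _ ↔ monomial (m.erase y + v) (1 : K) ∈ I :=
        (monomial_mem_iff_of_add_span_X_pow_eq hI hJ.isMonomialIdeal hIJ (by simpa using hvy)).symm
    _ ↔ ∃ i ∈ T, m.erase y i ≠ 0 := hv _
    _ ↔ ∃ i ∈ T \ {y}, m i ≠ 0 := by
        refine exists_congr fun i => ?_
        by_cases hi : i = y
        · simp [hi]
        · simp [hi, Finsupp.erase_ne hi]

end MonomialIdeal

theorem not_associated_of_prod_mem_pow_general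
    {K : Type*} [Field K] {n s : ℕ}
    (I : Ideal (MvPolynomial (Fin n) K)) (hI : IsMonomialIdeal I)
    (T : Set (Fin n)) (t : ℕ)
    (y : Fin s → Fin n) (hy : Function.Injective y)
    (α : Fin s → ℕ)
    (J : Fin s → Ideal (MvPolynomial (Fin n) K))
    (hJ : ∀ i, MonomialIdealAvoiding {y i} (J i))
    (hIJ : ∀ i, I ^ t + Ideal.span {(X (y i) : MvPolynomial (Fin n) K) ^ α i}
        = J i + Ideal.span {(X (y i) : MvPolynomial (Fin n) K) ^ α i})
    (hass : ∀ i,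
      Ideal.span ((X : Fin n → MvPolynomial (Fin n) K) '' (T \ {y i})) ∉
        associatedPrimes (MvPolynomial (Fin n) K)
          (MvPolynomial (Fin n) K ⧸ J i))
    (ℓ : ℕ) (hℓ : t ≤ ℓ)
    (hprod : (∏ i, (X (y i) : MvPolynomial (Fin n) K) ^ α i) ∈ I ^ ℓ) :
    Ideal.span ((X : Fin n → MvPolynomial (Fin n) K) '' T) ∉
      associatedPrimes (MvPolynomial (Fin n) K)
        (MvPolynomial (Fin n) K ⧸ I ^ t) := by
  intro hp
  obtain ⟨v, hv⟩ := ((hI.pow t).span_X_image_mem_associatedPrimes_iff T).mp hp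
  have hαv : ∀ i, α i ≤ v (y i) := fun i => by
    by_contra! hlt
    refine hass i (((hJ i).isMonomialIdeal.span_X_image_mem_associatedPrimes_iff _).mpr ⟨v, ?_⟩)
    exact (hJ i).monomial_add_mem_iff_of_add_span_X_pow_eq (hI.pow t) (hIJ i) hv hlt
  have hvI : monomial v (1 : K) ∈ I ^ t :=
    (I ^ t).mem_of_dvd (prod_X_pow_dvd_monomial hy hαv) (Ideal.pow_le_pow_right hℓ hprod)
  obtain ⟨i, -, hi⟩ := (hv 0).mp (by rwa [zero_add])
  exact hi rfl

/-- With the hypotheses of Statement 0, if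
`∏_{i=1}^s y_i^{α_i} ∈ I^ℓ` for some `ℓ ≥ t`, then `p ∉ Ass (R / I^t)`. -/
theorem not_associated_of_prod_mem_pow
    {K : Type*} [Field K] {n s : ℕ}
    (I : Ideal (MvPolynomial (Fin n) K)) (hI : IsMonomialIdeal I)
    (T : Set (Fin n)) (t : ℕ) (ht : 1 ≤ t)
    (y : Fin s → Fin n) (hy : Function.Injective y)
    (α : Fin s → ℕ) (hα : ∀ i, 1 ≤ α i)
    (J : Fin s → Ideal (MvPolynomial (Fin n) K))
    (hJ : ∀ i, MonomialIdealAvoiding {y i} (J i))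
    (hIJ : ∀ i, I ^ t + Ideal.span {(X (y i) : MvPolynomial (Fin n) K) ^ α i}
        = J i + Ideal.span {(X (y i) : MvPolynomial (Fin n) K) ^ α i})
    (hass : ∀ i,
      Ideal.span ((X : Fin n → MvPolynomial (Fin n) K) '' (T \ {y i})) ∉
        associatedPrimes (MvPolynomial (Fin n) K)
          (MvPolynomial (Fin n) K ⧸ J i))
    (ℓ : ℕ) (hℓ : t ≤ ℓ)
    (hprod : (∏ i, (X (y i) : MvPolynomial (Fin n) K) ^ α i) ∈ I ^ ℓ) :
    Ideal.span ((X : Fin n → MvPolynomial (Fin n) K) '' T) ∉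
      associatedPrimes (MvPolynomial (Fin n) K)
        (MvPolynomial (Fin n) K ⧸ I ^ t) :=
  not_associated_of_prod_mem_pow_general I hI T t y hy α J hJ hIJ hass ℓ hℓ hprod
end

section
/- Let I be a monomial ideal of R = K[x_1,…,x_n], let m = (x_1,…,x_n), let α_1,…,α_s be positive integers, and let y_1,…,y_s be distinct variables of R such that m ∉ Ass(R/(I + (y_1^{α_1}))) and, for each i = 2,…,s, m ∉ Ass(R/((I : ∏_{j=1}^{i−1} y_j^{α_j}) + (y_i^{α_i}))). If ∏_{i=1}^s y_i^{α_i} ∈ I, then m ∉ Ass(R/I). -/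
/-!
Multiplication by `g` and the projection give an exact sequence
`0 → R/(I : g) → R/I → R/(I + (g)) → 0`, so `Ass(R/I) ⊆ Ass(R/(I : g)) ∪ Ass(R/(I + (g)))`.
Applying this successively with `g = y₁^α₁, y₂^α₂, …` to `I, (I : y₁^α₁), (I : y₁^α₁ y₂^α₂), …`
puts every associated prime of `R/I` into one of the quotients of the hypotheses, except for
those of `R/(I : ∏ yᵢ^αᵢ)`; but that quotient is zero because `∏ yᵢ^αᵢ ∈ I`.
-/

open MvPolynomial

namespace Fin

variable {M : Type*} [CommMonoid M] {s : ℕ}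

theorem prod_filter_lt_of_val_eq_zero (f : Fin s → M) {i : Fin s} (hi : (i : ℕ) = 0) :
    ∏ j ∈ Finset.univ.filter (fun j => j < i), f j = 1 := by
  simp [Fin.lt_def, hi]

theorem prod_filter_lt_succ (f : Fin (s + 1) → M) (i : Fin s) :
    ∏ j ∈ Finset.univ.filter (fun j => j < i.succ), f j =
      f 0 * ∏ j ∈ Finset.univ.filter (fun j => j < i), f j.succ := by
  simp only [Finset.prod_filter, Fin.prod_univ_succ, Fin.succ_pos, Fin.succ_lt_succ_iff, if_true]

end Fin

namespace Ideal

variable {R : Type*} [CommRing R]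

theorem colon_span_singleton_colon_span_singleton (I : Ideal R) (a b : R) :
    (I.colon (span {a})).colon (span {b}) = I.colon (span {a * b}) := by
  ext r
  simp only [mem_colon_span_singleton, mul_assoc, mul_comm b]

theorem colon_span_singleton_one (I : Ideal R) : I.colon (span {(1 : R)}) = I := by
  ext r
  rw [mem_colon_span_singleton, mul_one]

theorem associatedPrimes_quotient_subset_colon_union_sup (I : Ideal R) (g : R) :
    associatedPrimes R (R ⧸ I) ⊆
      associatedPrimes R (R ⧸ I.colon (span {g})) ∪ associatedPrimes R (R ⧸ (I + span {g})) := by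
  let mulG : R ⧸ I.colon (span {g}) →ₗ[R] R ⧸ I :=
    (I.colon (span {g})).liftQ (I.mkQ ∘ₗ LinearMap.mulRight R g) fun r hr => by
      simpa [mem_colon_span_singleton, ← map_mul, Quotient.eq_zero_iff_mem] using hr
  have mulG_mk (c : R) : mulG (Quotient.mk _ c) = Quotient.mk I (c * g) := rfl
  refine associatedPrimes.subset_union_of_exact (f := mulG)
    (g := Submodule.factor (le_sup_left : I ≤ I ⊔ span {g})) ?_ fun x => ?_
  · rw [← LinearMap.ker_eq_bot, Submodule.ker_liftQ_eq_bot]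
    intro r hr
    simpa [mem_colon_span_singleton, ← map_mul, Quotient.eq_zero_iff_mem] using hr
  obtain ⟨r, rfl⟩ := Quotient.mk_surjective x
  change Quotient.mk (I ⊔ span {g}) r = 0 ↔ _
  rw [Quotient.eq_zero_iff_mem, Submodule.mem_sup]
  constructor
  · rintro ⟨a, ha, b, hb, rfl⟩
    obtain ⟨c, rfl⟩ := mem_span_singleton'.1 hb
    refine ⟨Quotient.mk _ c, ?_⟩
    rwa [mulG_mk, Quotient.eq, sub_add_cancel_right, neg_mem_iff]
  · rintro ⟨y, hy⟩
    obtain ⟨c, rfl⟩ := Quotient.mk_surjective y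
    rw [mulG_mk, Quotient.eq] at hy
    exact ⟨r - c * g, by rwa [← neg_sub, neg_mem_iff], c * g, mem_span_singleton'.2 ⟨c, rfl⟩,
      sub_add_cancel r (c * g)⟩

theorem associatedPrimes_quotient_subset_iUnion_of_prod_mem (I : Ideal R) {s : ℕ}
    (g : Fin s → R) (hg : ∏ i, g i ∈ I) :
    associatedPrimes R (R ⧸ I) ⊆ ⋃ i, associatedPrimes R
      (R ⧸ (I.colon (span {∏ j ∈ Finset.univ.filter (fun j => j < i), g j}) + span {g i})) := by
  induction s generalizing I with
  | zero =>
    have : Subsingleton (R ⧸ I) :=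
      Quotient.subsingleton_iff.2 ((eq_top_iff_one I).2 (by simpa using hg))
    simp [associatedPrimes.eq_empty_of_subsingleton]
  | succ s ih =>
    have hg_colon : ∏ i : Fin s, g i.succ ∈ I.colon (span {g 0}) := by
      rw [mem_colon_span_singleton, mul_comm, ← Fin.prod_univ_succ]
      exact hg
    refine (I.associatedPrimes_quotient_subset_colon_union_sup (g 0)).trans
      (Set.union_subset ((ih _ _ hg_colon).trans ?_) ?_)
    · refine Set.iUnion_subset fun i => ?_
      rw [colon_span_singleton_colon_span_singleton, ← Fin.prod_filter_lt_succ]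
      exact Set.subset_iUnion_of_subset i.succ subset_rfl
    · refine Set.subset_iUnion_of_subset 0 ?_
      rw [Fin.prod_filter_lt_of_val_eq_zero _ rfl, colon_span_singleton_one]

end Ideal

theorem maximal_not_associated_of_steps_and_prod_mem_general
    {K : Type*} [Field K] {n s : ℕ}
    (I : Ideal (MvPolynomial (Fin n) K))
    (α : Fin s → ℕ)
    (y : Fin s → Fin n)
    (h1 : ∀ i : Fin s, (i : ℕ) = 0 →
      Ideal.span (Set.range (X : Fin n → MvPolynomial (Fin n) K)) ∉
        associatedPrimes (MvPolynomial (Fin n) K)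
          (MvPolynomial (Fin n) K ⧸
            (I + Ideal.span {(X (y i) : MvPolynomial (Fin n) K) ^ α i})))
    (h2 : ∀ i : Fin s, 0 < (i : ℕ) →
      Ideal.span (Set.range (X : Fin n → MvPolynomial (Fin n) K)) ∉
        associatedPrimes (MvPolynomial (Fin n) K)
          (MvPolynomial (Fin n) K ⧸
            (I.colon (Ideal.span
                {∏ j ∈ Finset.univ.filter (fun j => j < i),
                  (X (y j) : MvPolynomial (Fin n) K) ^ α j}) +
              Ideal.span {(X (y i) : MvPolynomial (Fin n) K) ^ α i})))
    (hprod : (∏ i, (X (y i) : MvPolynomial (Fin n) K) ^ α i) ∈ I) :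
    Ideal.span (Set.range (X : Fin n → MvPolynomial (Fin n) K)) ∉
      associatedPrimes (MvPolynomial (Fin n) K)
        (MvPolynomial (Fin n) K ⧸ I) := by
  intro hm
  obtain ⟨i, hi⟩ :=
    Set.mem_iUnion.1 (I.associatedPrimes_quotient_subset_iUnion_of_prod_mem _ hprod hm)
  rcases Nat.eq_zero_or_pos i with hi0 | hi0
  · rw [Fin.prod_filter_lt_of_val_eq_zero _ hi0, Ideal.colon_span_singleton_one] at hi
    exact h1 i hi0 hi
  · exact h2 i hi0 hi

/-- Let `I` be a monomial ideal of `R = K[x_1,…,x_n]`,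
`m = (x_1,…,x_n)`, `α_1,…,α_s ≥ 1`, and `y_1,…,y_s` distinct variables such
that `m ∉ Ass (R / (I + (y_1^{α_1})))` and, for `i = 2,…,s`,
`m ∉ Ass (R / ((I : ∏_{j<i} y_j^{α_j}) + (y_i^{α_i})))`.  If
`∏_{i=1}^s y_i^{α_i} ∈ I`, then `m ∉ Ass (R / I)`. -/
theorem maximal_not_associated_of_steps_and_prod_mem
    {K : Type*} [Field K] {n s : ℕ}
    (I : Ideal (MvPolynomial (Fin n) K)) (hI : IsMonomialIdeal I)
    (α : Fin s → ℕ) (hα : ∀ i, 1 ≤ α i)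
    (y : Fin s → Fin n) (hy : Function.Injective y)
    (h1 : ∀ i : Fin s, (i : ℕ) = 0 →
      Ideal.span (Set.range (X : Fin n → MvPolynomial (Fin n) K)) ∉
        associatedPrimes (MvPolynomial (Fin n) K)
          (MvPolynomial (Fin n) K ⧸
            (I + Ideal.span {(X (y i) : MvPolynomial (Fin n) K) ^ α i})))
    (h2 : ∀ i : Fin s, 0 < (i : ℕ) →
      Ideal.span (Set.range (X : Fin n → MvPolynomial (Fin n) K)) ∉
        associatedPrimes (MvPolynomial (Fin n) K)
          (MvPolynomial (Fin n) K ⧸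
            (I.colon (Ideal.span
                {∏ j ∈ Finset.univ.filter (fun j => j < i),
                  (X (y j) : MvPolynomial (Fin n) K) ^ α j}) +
              Ideal.span {(X (y i) : MvPolynomial (Fin n) K) ^ α i})))
    (hprod : (∏ i, (X (y i) : MvPolynomial (Fin n) K) ^ α i) ∈ I) :
    Ideal.span (Set.range (X : Fin n → MvPolynomial (Fin n) K)) ∉
      associatedPrimes (MvPolynomial (Fin n) K)
        (MvPolynomial (Fin n) K ⧸ I) :=
  maximal_not_associated_of_steps_and_prod_mem_general I α y h1 h2 hprod
end
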